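/- arXiv:1210.3998 — 2 statements merged into one kernel-verified Lean document; each statement's English description precedes it below -/
import Mathlib

section
/- Let a be a nonzero real number, B > 0, and define D(ε,s) = -ε s² + i s + ε a for ε ∈ ℂ and s ∈ ℝ. Set c₀ = min{1/8, B/18, B/(8|a|), |a|/8, |a|B/4, √|a|/2}. Then there exists ε₁ > 0 such that for all s ∈ ℝ and all ε = x + iy ∈ ℂ with 0 < |ε| ≤ ε₁ and |x| ≥ B y², one has |D(ε,s)| ≥ c₀ · max{min{1, s²}, |ε|²}. -/
open Complex

/-!
Write `D(ε,s) = ε (a - s²) + i s` with `ε = x + iy`, so `Re D = x (a - s²)` and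
`Im D = y (a - s²) + s`. Inside the parabolas `|x| ≥ B y²`, and for `|ε| ≤ 1/B`, the real part
controls all of `ε`: `B |ε|² ≤ 2 |x|`. If `s² ≤ |a|/2`, then `|a - s²| ≍ |a|` and either `Im D`
is of size `|s|`, or `|s| ≲ |a| |y|` and `Re D` is of size `|a| |x| ≳ s²`. If `s² > |a|/2`, either
`Im D` is of size `|s| ≳ √|a|`, or `|y| |a - s²| ≳ |s|`; for small `ε` the latter forces
`s² ≥ 2|a|`, hence `|y| |s| ≳ 1` and `|Re D| ≳ B y² s² ≳ B`.
-/

namespace ParabolicSymbol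

noncomputable def D (a : ℝ) (ε : ℂ) (s : ℝ) : ℂ := -ε * (s : ℂ) ^ 2 + I * (s : ℂ) + ε * (a : ℂ)

variable {a B c s : ℝ} {ε : ℂ}

lemma re_D : (D a ε s).re = ε.re * (a - s ^ 2) := by
  simp [D, ← ofReal_pow]; ring

lemma im_D : (D a ε s).im = ε.im * (a - s ^ 2) + s := by
  simp [D, ← ofReal_pow]; ring

lemma abs_re_mul_le_norm_D : |ε.re| * |a - s ^ 2| ≤ ‖D a ε s‖ := by
  rw [← abs_mul, ← re_D]
  exact abs_re_le_norm _

lemma abs_sub_le_norm_D : |s| - |ε.im| * |a - s ^ 2| ≤ ‖D a ε s‖ := by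
  have h := abs_sub (ε.im * (a - s ^ 2) + s) (ε.im * (a - s ^ 2))
  rw [add_sub_cancel_left, abs_mul, ← im_D] at h
  linarith [abs_im_le_norm (D a ε s)]

lemma abs_sub_sq_le (a s : ℝ) : |a - s ^ 2| ≤ |a| + s ^ 2 := by
  have h := abs_sub a (s ^ 2)
  rwa [abs_of_nonneg (sq_nonneg s)] at h

lemma abs_abs_sub_sq_le (a s : ℝ) : |(|a| - s ^ 2)| ≤ |a - s ^ 2| := by
  have h := abs_abs_sub_abs_le_abs_sub a (s ^ 2)
  rwa [abs_of_nonneg (sq_nonneg s)] at h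

lemma min_one_sq_le_abs (s : ℝ) : min 1 (s ^ 2) ≤ |s| := by
  rcases le_total |s| 1 with h | h
  · refine (min_le_right _ _).trans ?_
    nlinarith [sq_abs s, abs_nonneg s]
  · exact (min_le_left _ _).trans h

lemma mul_sq_norm_le_two_mul_abs_re (hB : 0 < B) (hpar : B * ε.im ^ 2 ≤ |ε.re|)
    (hr : B * ‖ε‖ ≤ 1) : B * ‖ε‖ ^ 2 ≤ 2 * |ε.re| := by
  have hnorm : ‖ε‖ ^ 2 = |ε.re| ^ 2 + ε.im ^ 2 := by
    rw [Complex.sq_norm, normSq_apply, sq_abs]; ring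
  have hre : B * |ε.re| ^ 2 ≤ |ε.re| :=
    calc B * |ε.re| ^ 2 ≤ |ε.re| * (B * ‖ε‖) := by
          rw [sq, mul_left_comm]; gcongr; exact abs_re_le_norm ε
      _ ≤ |ε.re| := mul_le_of_le_one_right (abs_nonneg _) hr
  rw [hnorm]
  linarith

section SmallFrequency

variable (hs : s ^ 2 ≤ |a| / 2)
include hs

lemma half_abs_le_abs_sub_sq : |a| / 2 ≤ |a - s ^ 2| := by
  linarith [le_abs_self (|a| - s ^ 2), abs_abs_sub_sq_le a s]

lemma mul_sq_norm_le_norm_D (hB : 0 < B) (hpar : B * ε.im ^ 2 ≤ |ε.re|) (hr : B * ‖ε‖ ≤ 1)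
    (hc : c ≤ |a| * B / 4) : c * ‖ε‖ ^ 2 ≤ ‖D a ε s‖ := by
  have hε := mul_sq_norm_le_two_mul_abs_re hB hpar hr
  calc c * ‖ε‖ ^ 2 ≤ |a| / 4 * (B * ‖ε‖ ^ 2) := by nlinarith [sq_nonneg ‖ε‖]
    _ ≤ |a| / 2 * |ε.re| := by nlinarith [abs_nonneg a]
    _ ≤ |ε.re| * |a - s ^ 2| := by
        rw [mul_comm]; gcongr; exact half_abs_le_abs_sub_sq hs
    _ ≤ ‖D a ε s‖ := abs_re_mul_le_norm_D

lemma mul_min_le_norm_D (ha : a ≠ 0) (hpar : B * ε.im ^ 2 ≤ |ε.re|) (hc₀ : 0 ≤ c)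
    (hc₁ : c ≤ 1 / 8) (hc₂ : c ≤ B / (8 * |a|)) : c * min 1 (s ^ 2) ≤ ‖D a ε s‖ := by
  have hA : |a - s ^ 2| ≤ 3 * |a| / 2 := by linarith [abs_sub_sq_le a s]
  rcases le_total (2 * |a| * |ε.im|) |s| with him | hre
  · calc c * min 1 (s ^ 2) ≤ 1 / 8 * |s| := by
          gcongr
          exact min_one_sq_le_abs s
      _ ≤ |s| - |ε.im| * |a - s ^ 2| := by nlinarith [abs_nonneg ε.im]
      _ ≤ ‖D a ε s‖ := abs_sub_le_norm_D
  · have hc : c * (8 * |a|) ≤ B := (le_div_iff₀ (by positivity)).mp hc₂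
    have hs' : s ^ 2 ≤ (2 * |a| * |ε.im|) ^ 2 := by
      rw [← sq_abs s]; exact pow_le_pow_left₀ (abs_nonneg s) hre 2
    calc c * min 1 (s ^ 2) ≤ c * (2 * |a| * |ε.im|) ^ 2 := by
          gcongr
          exact (min_le_right _ _).trans hs'
      _ = c * (8 * |a|) * (|a| / 2 * ε.im ^ 2) := by rw [← sq_abs ε.im]; ring
      _ ≤ B * (|a| / 2 * ε.im ^ 2) := by gcongr
      _ = |a| / 2 * (B * ε.im ^ 2) := by ring
      _ ≤ |a| / 2 * |ε.re| := by gcongr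
      _ ≤ |ε.re| * |a - s ^ 2| := by
          rw [mul_comm]; gcongr; exact half_abs_le_abs_sub_sq hs
      _ ≤ ‖D a ε s‖ := abs_re_mul_le_norm_D

end SmallFrequency

section LargeFrequency

variable (h : |s| ≤ 2 * (|ε.im| * |a - s ^ 2|))
include h

lemma sq_le_half_abs_of_le_two_mul_abs_im (hr : ‖ε‖ ≤ 1) (hr' : 72 * |a| * ‖ε‖ ≤ 1)
    (hs : s ^ 2 ≤ 2 * |a|) : s ^ 2 ≤ |a| / 2 := by
  have hA : |a - s ^ 2| ≤ 3 * |a| := by linarith [abs_sub_sq_le a s]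
  have hs' : |s| ≤ 6 * |a| * ‖ε‖ := by
    nlinarith [abs_im_le_norm ε, abs_nonneg ε.im, abs_nonneg (a - s ^ 2), norm_nonneg ε]
  have hsq : s ^ 2 ≤ (6 * |a| * ‖ε‖) ^ 2 := by
    rw [← sq_abs s]; exact pow_le_pow_left₀ (abs_nonneg s) hs' 2
  nlinarith [mul_le_mul_of_nonneg_left hr' (by positivity : 0 ≤ |a| * ‖ε‖ / 2),
    mul_le_mul_of_nonneg_left hr (abs_nonneg a)]

lemma div_eighteen_le_norm_D (ha : a ≠ 0) (hB : 0 ≤ B) (hpar : B * ε.im ^ 2 ≤ |ε.re|)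
    (hs : 2 * |a| ≤ s ^ 2) : B / 18 ≤ ‖D a ε s‖ := by
  have hs₀ : 0 < |s| := by
    have := abs_pos.mpr ha
    nlinarith [sq_abs s, abs_nonneg s]
  have hA : s ^ 2 / 2 ≤ |a - s ^ 2| := by linarith [neg_abs_le (|a| - s ^ 2), abs_abs_sub_sq_le a s]
  have hA' : |a - s ^ 2| ≤ 3 * s ^ 2 / 2 := by linarith [abs_sub_sq_le a s]
  have hys : 1 ≤ 3 * |ε.im| * |s| := by
    have : |s| ≤ |s| * (3 * |ε.im| * |s|) := by
      nlinarith [sq_abs s, abs_nonneg ε.im]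
    nlinarith
  have hys' : 1 ≤ 9 * ε.im ^ 2 * s ^ 2 := by
    nlinarith [sq_abs ε.im, sq_abs s, abs_nonneg ε.im]
  calc B / 18 ≤ B * ε.im ^ 2 * (s ^ 2 / 2) := by nlinarith
    _ ≤ |ε.re| * |a - s ^ 2| := by gcongr
    _ ≤ ‖D a ε s‖ := abs_re_mul_le_norm_D

end LargeFrequency

lemma le_norm_D_of_half_abs_lt_sq (ha : a ≠ 0) (hB : 0 ≤ B) (hs : |a| / 2 < s ^ 2)
    (hpar : B * ε.im ^ 2 ≤ |ε.re|) (hr : ‖ε‖ ≤ 1) (hr' : 72 * |a| * ‖ε‖ ≤ 1) (hc₀ : 0 ≤ c)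
    (hc₁ : c ≤ 1 / 8) (hc₂ : c ≤ |a| / 8) (hc₃ : c ≤ B / 18) : c ≤ ‖D a ε s‖ := by
  by_cases h : |s| ≤ 2 * (|ε.im| * |a - s ^ 2|)
  · rcases le_total (s ^ 2) (2 * |a|) with hs' | hs'
    · exact absurd (sq_le_half_abs_of_le_two_mul_abs_im h hr hr' hs') (not_le.mpr hs)
    · exact hc₃.trans (div_eighteen_le_norm_D h ha hB hpar hs')
  · have hc : c ≤ |s| / 2 := by
      have : c ^ 2 ≤ (|s| / 2) ^ 2 := by nlinarith [sq_abs s, abs_nonneg a]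
      exact pow_le_pow_iff_left₀ hc₀ (by positivity) two_ne_zero |>.mp this
    linarith [abs_sub_le_norm_D (a := a) (ε := ε) (s := s)]

end ParabolicSymbol

open ParabolicSymbol in
theorem stmt0 (a : ℝ) (ha : a ≠ 0) (B : ℝ) (hB : 0 < B)
    (c₀ : ℝ)
    (hc₀ : c₀ = min (1/8) (min (B/18) (min (B/(8 * |a|)) (min (|a| / 8) (min (|a| * B/4) (Real.sqrt |a| / 2)))))) :
    ∃ ε₁ > 0, ∀ (s : ℝ) (ε : ℂ), 0 < ‖ε‖ → ‖ε‖ ≤ ε₁ → |ε.re| ≥ B * ε.im ^ 2 →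
      ‖-ε * (s:ℂ)^2 + Complex.I * (s:ℂ) + ε * (a:ℂ)‖ ≥
        c₀ * max (min 1 (s^2)) (‖ε‖^2) := by
  have hc₀' : 0 ≤ c₀ := hc₀ ▸ by positivity
  obtain ⟨hc₁, hc₂, hc₃, hc₄, hc₅, -⟩ := by simpa only [le_min_iff] using hc₀.le
  have ha' : 0 < |a| := abs_pos.mpr ha
  refine ⟨min 1 (min (1 / B) (1 / (72 * |a|))), by positivity, fun s ε _ hε hpar => ?_⟩
  simp only [le_min_iff] at hε
  obtain ⟨hr, hrB, hra⟩ := hε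
  have hrB' : B * ‖ε‖ ≤ 1 := (le_div_iff₀' hB).mp hrB
  have hra' : 72 * |a| * ‖ε‖ ≤ 1 := (le_div_iff₀' (by positivity)).mp hra
  change c₀ * _ ≤ ‖D a ε s‖
  by_cases hs : s ^ 2 ≤ |a| / 2
  · rw [mul_max_of_nonneg _ _ hc₀']
    exact max_le (mul_min_le_norm_D hs ha hpar hc₀' hc₁ hc₃)
      (mul_sq_norm_le_norm_D hs hB hpar hrB' hc₅)
  · have hmax : max (min 1 (s ^ 2)) (‖ε‖ ^ 2) ≤ 1 :=
      max_le (min_le_left _ _) (pow_le_one₀ (norm_nonneg ε) hr)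
    calc c₀ * max (min 1 (s ^ 2)) (‖ε‖ ^ 2) ≤ c₀ := mul_le_of_le_one_right hc₀' hmax
      _ ≤ ‖D a ε s‖ :=
        le_norm_D_of_half_abs_lt_sq ha hB.le (not_le.mp hs) hpar hr hra' hc₀' hc₁ hc₄ hc₂
end

section
/- Consider labelled rooted trees θ where each internal node v has p_v ≥ 2 children, each internal node carries a degree label d_v ∈ {0,1}, and lines carry momenta in ℤ^d determined as sums of the modes of end nodes below them. Let E(θ) be the set of end nodes (leaves), V(θ) the internal nodes, L₀(θ) a subset of the lines exiting degree-1 internal nodes defined by excluding the 'resonant' lines L₁(θ) (at least one line per node in V̄₁(θ), the degree-1 internal nodes whose children are all leaves with nonzero exiting momentum, or with exactly one leaf child and one non-leaf child with both incident momenta nonzero). Then 4|L₀(θ)| ≤ 3|E(θ)| − 4. -/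
/-- Labelled rooted trees: an end node (leaf) carries a mode label `ν ∈ ℤ^d`;
an internal node carries a degree label `d_v ∈ {0,1}` (encoded as a `Bool`,
`true` meaning `d_v = 1`) and a list of subtrees. -/
inductive LTree (d : ℕ) where
  | leaf : (Fin d → ℤ) → LTree d
  | node : Bool → List (LTree d) → LTree d

namespace LTree

variable {d : ℕ}

/-- `t` is an end node. -/
def isLeaf : LTree d → Prop
  | .leaf _ => True
  | .node _ _ => False

/-- Momentum of the line exiting a subtree: the sum of the mode labels of the
end nodes of the subtree. -/
def mom : LTree d → (Fin d → ℤ)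
  | .leaf ν => ν
  | .node _ [] => 0
  | .node b (t :: ts) => mom t + mom (.node b ts)

/-- Number of end nodes of a labelled tree. -/
def numLeaves : LTree d → ℕ
  | .leaf _ => 1
  | .node _ [] => 0
  | .node b (t :: ts) => numLeaves t + numLeaves (.node b ts)

/-- Subtree at a position (a list of child indices); a line of the tree is
identified with the position of the node it exits. -/
def sub? : LTree d → List ℕ → Option (LTree d)
  | t, [] => some t
  | .leaf _, _ :: _ => none
  | .node _ ts, i :: p =>
      match ts[i]? with
      | some t => sub? t p
      | none => none

/-- Well-formedness: every mode label is nonzero, every internal node has at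
least two children, and a line exiting an internal node with degree label `0`
has zero momentum. -/
def wf : LTree d → Prop
  | .leaf ν => ν ≠ 0
  | .node b ts => 2 ≤ ts.length ∧ (b = false → mom (.node b ts) = 0) ∧
      ∀ t ∈ ts.attach, wf t.1
decreasing_by
  have := List.sizeOf_lt_of_mem t.2
  simp at this ⊢
  omega

end LTree

/-!
Put `w(t, L) = 3|E(t)| - 4|L|`. A leaf has `w = 3`; by induction an internal node has `w ≥ 4`,
and `w ≥ 5` when its exiting line is not in `L`. At a node, `w` is at least the sum of the
children's values, minus 4 if the exiting line is in `L`. With at least two children that sum is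
at least 6. If the exiting line is in `L`, the node is not in `V̄₂`, so some child is internal and
the sum is at least 8, except when there is exactly one leaf child and one internal child; then
the node is in `V̄₃`, so the internal child's exiting line is not in `L` and it contributes 5.
-/

namespace LTree

variable {d : ℕ}

noncomputable def subLines (L : Finset (List ℕ)) (i : ℕ) : Finset (List ℕ) :=
  L.preimage (List.cons i) List.cons_injective.injOn

@[simp]
lemma mem_subLines {L : Finset (List ℕ)} {i : ℕ} {q : List ℕ} : q ∈ subLines L i ↔ i :: q ∈ L :=
  Finset.mem_preimage

lemma card_le_subLines {L : Finset (List ℕ)} {n : ℕ} (h : ∀ i q, i :: q ∈ L → i < n) :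
    L.card ≤ (if [] ∈ L then 1 else 0) + ∑ i : Fin n, (subLines L i).card := by
  have hcover : L ⊆ L.filter (· = []) ∪ Finset.univ.biUnion fun i : Fin n =>
      (subLines L i).map ⟨List.cons i, List.cons_injective⟩ := by
    rintro (_ | ⟨i, q⟩) hp
    · simp [hp]
    · simpa using ⟨⟨i, h i q hp⟩, hp, rfl⟩
  have hroot : (L.filter (· = [])).card = if [] ∈ L then 1 else 0 := by
    split_ifs with h0
    · exact Finset.card_eq_one.mpr ⟨[], by ext p; constructor <;> simp_all⟩
    · exact Finset.card_eq_zero.mpr (Finset.filter_eq_empty_iff.mpr fun p hp hp0 => h0 (hp0 ▸ hp))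
  calc L.card ≤ _ := Finset.card_le_card hcover
    _ ≤ _ := Finset.card_union_le _ _
    _ ≤ _ := by
      rw [hroot]
      gcongr
      exact Finset.card_biUnion_le.trans_eq (by simp)

/-- `L` is a candidate for `L₀(t)`: its lines exit degree-1 nodes with nonzero momentum and avoid
the resonant lines `L₁(t)` of the nodes in `V̄₁(t)`. -/
structure Admissible (t : LTree d) (L : Finset (List ℕ)) : Prop where
  exists_node : ∀ p ∈ L, ∃ ts : List (LTree d),
    t.sub? p = some (node true ts) ∧ mom (node true ts) ≠ 0
  not_mem_of_leaves : ∀ (p : List ℕ) (ts : List (LTree d)),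
    t.sub? p = some (node true ts) → (∀ u ∈ ts, u.isLeaf) → mom (node true ts) ≠ 0 → p ∉ L
  not_mem_and_mem : ∀ (p : List ℕ) (ts : List (LTree d)) (i : ℕ) (u : LTree d),
    t.sub? p = some (node true ts) → ts.length = 2 → ts[i]? = some u → ¬ u.isLeaf →
    (∀ (j : ℕ) (u' : LTree d), j ≠ i → ts[j]? = some u' → u'.isLeaf) →
    mom (node true ts) ≠ 0 → u.mom ≠ 0 → ¬ (p ∈ L ∧ p ++ [i] ∈ L)

lemma sub?_node_cons {b : Bool} {ts : List (LTree d)} {i : ℕ} {u : LTree d} (h : ts[i]? = some u)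
    (q : List ℕ) : sub? (node b ts) (i :: q) = sub? u q := by
  simp [sub?, h]

lemma lt_length_of_sub?_eq_some {b : Bool} {ts : List (LTree d)} {i : ℕ} {q : List ℕ}
    {v : LTree d} (h : sub? (node b ts) (i :: q) = some v) : i < ts.length := by
  by_contra hi
  simp [sub?, List.getElem?_eq_none (not_lt.mp hi)] at h

lemma eq_of_sub?_leaf_eq_some {ν : Fin d → ℤ} {p : List ℕ} {v : LTree d}
    (h : sub? (leaf ν) p = some v) : v = leaf ν := by
  cases p <;> simp_all [sub?]

namespace Admissible

variable {L : Finset (List ℕ)}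

lemma eq_empty_of_leaf {ν : Fin d → ℤ} (hL : Admissible (leaf ν) L) : L = ∅ := by
  refine Finset.eq_empty_of_forall_notMem fun p hp => ?_
  obtain ⟨ts, hsub, -⟩ := hL.exists_node p hp
  cases eq_of_sub?_leaf_eq_some hsub

lemma child {b : Bool} {ts : List (LTree d)} (hL : Admissible (node b ts) L) (i : Fin ts.length) :
    Admissible ts[i] (subLines L i) := by
  have hsub := sub?_node_cons (b := b) (List.getElem?_eq_getElem i.isLt)
  refine ⟨fun q hq => ?_, fun q us hq => ?_, fun q us j u hq => ?_⟩
  · simpa [hsub] using hL.exists_node _ (mem_subLines.mp hq)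
  · simpa using hL.not_mem_of_leaves (i :: q) us (by rw [hsub]; exact hq)
  · simpa using hL.not_mem_and_mem (i :: q) us j u (by rw [hsub]; exact hq)

end Admissible

lemma numLeaves_node (b : Bool) (ts : List (LTree d)) :
    numLeaves (node b ts) = ∑ i : Fin ts.length, ts[i].numLeaves := by
  have hmap : ∀ ts : List (LTree d), numLeaves (node b ts) = (ts.map numLeaves).sum := by
    intro ts
    induction ts with
    | nil => simp [numLeaves]
    | cons t ts ih => simp [numLeaves, ih]
  rw [hmap, ← List.ofFn_getElem_eq_map, List.sum_ofFn]
  rfl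

def excess (t : LTree d) (L : Finset (List ℕ)) : ℤ := 3 * t.numLeaves - 4 * L.card

lemma excess_of_isLeaf {t : LTree d} {L : Finset (List ℕ)} (ht : t.isLeaf) (hL : Admissible t L) :
    excess t L = 3 := by
  cases t with
  | leaf ν => simp [excess, hL.eq_empty_of_leaf, numLeaves]
  | node b ts => exact ht.elim

lemma sum_excess_sub_le_excess_node {b : Bool} {ts : List (LTree d)} {L : Finset (List ℕ)}
    (hL : Admissible (node b ts) L) :
    ∑ i : Fin ts.length, excess ts[i] (subLines L i) - 4 * (if [] ∈ L then 1 else 0) ≤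
      excess (node b ts) L := by
  have hcard := card_le_subLines (n := ts.length) fun i q hq => by
    obtain ⟨_, hsub, -⟩ := hL.exists_node _ hq
    exact lt_length_of_sub?_eq_some hsub
  have hcard' : (L.card : ℤ) ≤
      (if [] ∈ L then 1 else 0) + ∑ i : Fin ts.length, ((subLines L i).card : ℤ) := by
    exact_mod_cast hcard
  simp only [excess, numLeaves_node, Nat.cast_sum, Finset.sum_sub_distrib, ← Finset.mul_sum]
  linarith

lemma eight_le_sum_excess {ts : List (LTree d)} {L : Finset (List ℕ)} (hlen : 2 ≤ ts.length)
    (hL : Admissible (node true ts) L) (hroot : [] ∈ L) (hmom : mom (node true ts) ≠ 0)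
    (hthree : ∀ i : Fin ts.length, 3 ≤ excess ts[i] (subLines L i))
    (hinternal : ∀ i : Fin ts.length, ¬ ts[i].isLeaf → 4 ≤ excess ts[i] (subLines L i) ∧
      ([] ∉ subLines L i → 5 ≤ excess ts[i] (subLines L i))) :
    8 ≤ ∑ i : Fin ts.length, excess ts[i] (subLines L i) := by
  set w := fun i : Fin ts.length => excess ts[i] (subLines L i)
  obtain ⟨k, hk⟩ : ∃ k : Fin ts.length, ¬ ts[k].isLeaf := by
    by_contra! hleaves
    refine hL.not_mem_of_leaves [] ts rfl (fun u hu => ?_) hmom hroot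
    obtain ⟨i, hi, rfl⟩ := List.mem_iff_getElem.mp hu
    exact hleaves ⟨i, hi⟩
  have hrest : ((ts.length - 1 : ℕ) : ℤ) * 3 ≤ ∑ i ∈ Finset.univ.erase k, w i := by
    have := Finset.card_nsmul_le_sum (Finset.univ.erase k) w 3 fun i _ => hthree i
    simpa only [Finset.card_erase_of_mem (Finset.mem_univ k), Finset.card_univ, Fintype.card_fin,
      nsmul_eq_mul] using this
  rw [← Finset.add_sum_erase _ w (Finset.mem_univ k)]
  rcases hlen.eq_or_lt with htwo | hmore
  · obtain ⟨j, hj⟩ : ∃ j, Finset.univ.erase k = {j} :=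
      Finset.card_eq_one.mp (by rw [Finset.card_erase_of_mem (Finset.mem_univ k)]; simp [← htwo])
    rw [hj, Finset.sum_singleton]
    by_cases hjleaf : ts[j].isLeaf
    · -- the root is in `V̄₁` with the line from `k` as its non-leaf entering line
      have hk_out : [] ∉ subLines L k := by
        intro hkL
        obtain ⟨us, hus, hmom'⟩ := hL.exists_node _ (mem_subLines.mp hkL)
        rw [sub?_node_cons (List.getElem?_eq_getElem k.isLt)] at hus
        refine hL.not_mem_and_mem [] ts k ts[k] rfl htwo.symm (List.getElem?_eq_getElem k.isLt)
          hk (fun j' u' hj'k hj' => ?_) hmom (by simp_all [sub?]) ⟨hroot, mem_subLines.mp hkL⟩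
        obtain ⟨hj'lt, rfl⟩ := List.getElem?_eq_some_iff.mp hj'
        have : (⟨j', hj'lt⟩ : Fin ts.length) ∈ Finset.univ.erase k := by simp [Fin.ext_iff, hj'k]
        rw [hj, Finset.mem_singleton] at this
        simpa [← this] using hjleaf
      linarith [(hinternal k hk).2 hk_out, hthree j]
    · linarith [(hinternal k hk).1, (hinternal j hjleaf).1]
  · have : (2 : ℤ) ≤ ((ts.length - 1 : ℕ) : ℤ) := by omega
    linarith [(hinternal k hk).1]

lemma le_excess_node {b : Bool} {ts : List (LTree d)} {L : Finset (List ℕ)} (hlen : 2 ≤ ts.length)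
    (hL : Admissible (node b ts) L)
    (hthree : ∀ i : Fin ts.length, 3 ≤ excess ts[i] (subLines L i))
    (hinternal : ∀ i : Fin ts.length, ¬ ts[i].isLeaf → 4 ≤ excess ts[i] (subLines L i) ∧
      ([] ∉ subLines L i → 5 ≤ excess ts[i] (subLines L i))) :
    4 ≤ excess (node b ts) L ∧ ([] ∉ L → 5 ≤ excess (node b ts) L) := by
  have hsum := sum_excess_sub_le_excess_node hL
  have hsix : 6 ≤ ∑ i : Fin ts.length, excess ts[i] (subLines L i) := by
    have := Finset.card_nsmul_le_sum Finset.univ _ 3 fun i _ => hthree i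
    simp only [Finset.card_univ, Fintype.card_fin, nsmul_eq_mul] at this
    have : (2 : ℤ) ≤ ts.length := by exact_mod_cast hlen
    linarith
  by_cases hroot : [] ∈ L
  · obtain ⟨us, hus, hmom⟩ := hL.exists_node [] hroot
    cases hus
    rw [if_pos hroot] at hsum
    have := eight_le_sum_excess hlen hL hroot hmom hthree hinternal
    exact ⟨by linarith, absurd hroot⟩
  · rw [if_neg hroot] at hsum
    exact ⟨by linarith, fun _ => by linarith⟩

theorem le_excess : ∀ {t : LTree d} {L : Finset (List ℕ)}, t.wf → ¬ t.isLeaf → Admissible t L →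
    4 ≤ excess t L ∧ ([] ∉ L → 5 ≤ excess t L)
  | .leaf _, _, _, hleaf, _ => absurd trivial hleaf
  | .node b ts, L, hwf, _, hL => by
    rw [wf] at hwf
    have hinternal : ∀ i : Fin ts.length, ¬ ts[i].isLeaf → 4 ≤ excess ts[i] (subLines L i) ∧
        ([] ∉ subLines L i → 5 ≤ excess ts[i] (subLines L i)) := fun i hi =>
      le_excess (hwf.2.2 ⟨_, List.getElem_mem i.isLt⟩ (List.mem_attach _ _)) hi (hL.child i)
    refine le_excess_node hwf.1 hL (fun i => ?_) hinternal
    by_cases hi : ts[i].isLeaf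
    · exact (excess_of_isLeaf hi (hL.child i)).ge
    · linarith [(hinternal i hi).1]
termination_by t => t
decreasing_by
  have := List.sizeOf_lt_of_mem (List.getElem_mem i.isLt)
  simp only [node.sizeOf_spec, Fin.getElem_fin] at *
  omega

end LTree

/-- Lemma 3.5 of the paper: let `θ` be a (well-formed) labelled rooted tree whose
root is an internal node, and let `L₀` be a set of lines (identified with the
positions of the nodes they exit) such that:
* every line of `L₀` exits an internal node with degree label `1` and has
  nonzero momentum;
* for every internal node `v` of degree label `1` all of whose children are end
  nodes and whose exiting line has nonzero momentum (`v ∈ V̄₂(θ)`), the line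
  exiting `v` is not in `L₀` (it is a 'resonant' line of `L₁(θ)`);
* for every internal node `v` of degree label `1` with exactly two children, one
  an end node and the other internal, such that both the line exiting `v` and
  the non-leaf line entering `v` have nonzero momentum (`v ∈ V̄₃(θ)`), at least
  one of these two lines is not in `L₀` (it belongs to `L₁(θ,v) ≠ ∅`).
Then `4|L₀(θ)| ≤ 3|E(θ)| − 4`. -/
theorem stmt11 {d : ℕ} (θ : LTree d) (hwf : LTree.wf θ)
    (hroot : ¬ LTree.isLeaf θ)
    (L₀ : Finset (List ℕ))
    (hmem : ∀ p ∈ L₀, ∃ ts : List (LTree d),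
      LTree.sub? θ p = some (LTree.node true ts) ∧ LTree.mom (LTree.node true ts) ≠ 0)
    (hV2 : ∀ (p : List ℕ) (ts : List (LTree d)),
      LTree.sub? θ p = some (LTree.node true ts) →
      (∀ t ∈ ts, LTree.isLeaf t) →
      LTree.mom (LTree.node true ts) ≠ 0 → p ∉ L₀)
    (hV3 : ∀ (p : List ℕ) (ts : List (LTree d)) (i : ℕ) (t : LTree d),
      LTree.sub? θ p = some (LTree.node true ts) →
      ts.length = 2 →
      ts[i]? = some t → ¬ LTree.isLeaf t →
      (∀ (j : ℕ) (t' : LTree d), j ≠ i → ts[j]? = some t' → LTree.isLeaf t') →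
      LTree.mom (LTree.node true ts) ≠ 0 → LTree.mom t ≠ 0 →
      ¬ (p ∈ L₀ ∧ p ++ [i] ∈ L₀)) :
    4 * L₀.card + 4 ≤ 3 * LTree.numLeaves θ := by
  have h := (LTree.le_excess hwf hroot ⟨hmem, hV2, hV3⟩).1
  unfold LTree.excess at h
  omega
end
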